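/- Let ξ be an integer-valued random variable with E[ξ] = 1 and E[ξ²] < ∞, and let S_n be the sum of n i.i.d. copies of ξ. Then there exists a constant C such that for all n ≥ 1 and all integers m, P(S_n = n − m) ≤ C·n^{1/2}·m⁻². -/

import Mathlib

/-
Split `S_n = A + B` into the sums over the first `⌊n/2⌋` indices and over the rest. If
`S_n = n - m`, one of the two blocks deviates from its mean by at least `|m|/2`; by independence
the probability of this is at most the largest point mass of the other block times the Chebyshev
bound `O(n σ² / m²)` for the deviating one. When `ξ` has two atoms `a ≠ b`, point masses of a block
of length `k` are `O(k^{-1/2})`: by Fourier inversion on `[-π, π]` they are bounded by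
`(2π)⁻¹ ∫ |φ|^k`, and `|φ(t)|² ≤ 1 - P(ξ = a) P(ξ = b) (1 - cos((b - a) t))` turns this integral
into a Gaussian one. When `ξ` is a.s. constant its variance vanishes and Chebyshev alone gives `0`.
-/

open MeasureTheory ProbabilityTheory Real

variable {Ω : Type*} {mΩ : MeasurableSpace Ω} {μ : Measure Ω}

theorem Function.Periodic.intervalIntegral_comp_int_mul {E : Type*} [NormedAddCommGroup E]
    [NormedSpace ℝ E] {f : ℝ → E} {T : ℝ} (hf : Function.Periodic f T)
    (h_int : ∀ t₁ t₂, IntervalIntegrable f volume t₁ t₂) {k : ℤ} (hk : k ≠ 0) (t : ℝ) :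
    ∫ x in t..t + T, f (k * x) = ∫ x in t..t + T, f x := by
  have hk' : (k : ℝ) ≠ 0 := by exact_mod_cast hk
  rw [intervalIntegral.integral_comp_mul_left f hk', mul_add, ← zsmul_eq_mul (a := T),
    hf.intervalIntegral_add_zsmul_eq k _ h_int, hf.intervalIntegral_add_eq _ t,
    ← Int.cast_smul_eq_zsmul ℝ, smul_smul, inv_mul_cancel₀ hk', one_smul]

lemma integral_exp_neg_mul_one_sub_cos_le {c : ℝ} (hc : 0 < c) :
    ∫ t in -π..π, exp (-c * (1 - cos t)) ≤ √(π ^ 3 / (2 * c)) := by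
  set b := 2 * c / π ^ 2
  have hb : 0 < b := by positivity
  calc ∫ t in -π..π, exp (-c * (1 - cos t))
      ≤ ∫ t in -π..π, exp (-b * t ^ 2) := by
        refine intervalIntegral.integral_mono_on (neg_le_self pi_pos.le)
          (Continuous.intervalIntegrable (by fun_prop) _ _)
          (Continuous.intervalIntegrable (by fun_prop) _ _) fun t ht => exp_le_exp.2 ?_
        have := cos_le_one_sub_mul_cos_sq (abs_le.2 ht)
        have : b * t ^ 2 = c * (2 / π ^ 2 * t ^ 2) := by ring
        nlinarith
    _ ≤ ∫ t, exp (-b * t ^ 2) := by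
        rw [intervalIntegral.integral_of_le (neg_le_self pi_pos.le)]
        exact setIntegral_le_integral (integrable_exp_neg_mul_sq hb)
          (ae_of_all _ fun t => (exp_pos _).le)
    _ = √(π ^ 3 / (2 * c)) := by
        rw [integral_gaussian]
        congr 1
        simp only [b]
        field_simp

section
open Complex

lemma integral_exp_int_mul_mul_I (r : ℤ) :
    ∫ t in -π..π, cexp (t * r * I) = if r = 0 then (2 * π : ℂ) else 0 := by
  split_ifs with hr
  · simp [hr, two_mul]
  have hr' : (r : ℝ) ≠ 0 := by exact_mod_cast hr
  have h := intervalIntegral.integral_comp_mul_left (a := -π) (b := π)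
    (fun x : ℝ => cexp (x * I)) hr'
  simp only [mul_neg, integral_exp_mul_I_eq_sin, Real.sin_int_mul_pi] at h
  simpa [mul_comm] using h

lemma integral_charFun_mul_exp_eq [IsFiniteMeasure μ] {Y : Ω → ℤ} (hY : Measurable Y) (j : ℤ) :
    ∫ t in -π..π, charFun (μ.map fun ω => (Y ω : ℝ)) t * cexp (-(t * j) * I) =
      2 * π * μ.real {ω | Y ω = j} := by
  set f : ℝ → Ω → ℂ := fun t ω => cexp (t * (Y ω - j : ℤ) * I)
  have hYj : Measurable fun ω => ((Y ω - j : ℤ) : ℂ) := measurable_from_top.comp (hY.sub_const j)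
  have hf : Integrable (Function.uncurry f) ((volume.restrict (Set.Ioc (-π) π)).prod μ) := by
    refine Integrable.of_bound (Measurable.aestronglyMeasurable ?_) 1 (ae_of_all _ fun p => ?_)
    · exact Complex.measurable_exp.comp
        (((measurable_ofReal.comp measurable_fst).mul (hYj.comp measurable_snd)).mul_const I)
    · simp only [f, Function.uncurry, ← ofReal_intCast, ← Complex.ofReal_mul,
        norm_exp_ofReal_mul_I, le_refl]
  have hcharFun (t : ℝ) : charFun (μ.map fun ω => (Y ω : ℝ)) t * cexp (-(t * j) * I) =
      ∫ ω, f t ω ∂μ := by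
    rw [charFun_apply_real, integral_map (by fun_prop) (by fun_prop), ← integral_mul_const]
    congr 1 with ω
    rw [← Complex.exp_add]
    push_cast [f]
    ring_nf
  have hind : (fun ω => if Y ω = j then (2 * π : ℂ) else 0) =
      (Y ⁻¹' {j}).indicator fun _ => (2 * π : ℂ) := by
    ext ω; simp [Set.indicator]
  simp_rw [hcharFun, intervalIntegral.integral_of_le (neg_le_self pi_pos.le)]
  rw [integral_integral_swap hf]
  simp_rw [← intervalIntegral.integral_of_le (neg_le_self pi_pos.le), f,
    integral_exp_int_mul_mul_I, sub_eq_zero]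
  rw [hind, integral_indicator_const _ (hY (measurableSet_singleton j)), Complex.real_smul,
    mul_comm]
  rfl

lemma measureReal_eq_le_integral_norm_charFun [IsFiniteMeasure μ] {Y : Ω → ℤ}
    (hY : Measurable Y) (j : ℤ) :
    μ.real {ω | Y ω = j} ≤
      (2 * π)⁻¹ * ∫ t in -π..π, ‖charFun (μ.map fun ω => (Y ω : ℝ)) t‖ := by
  have hnorm (t : ℝ) : ‖charFun (μ.map fun ω => (Y ω : ℝ)) t * cexp (-(t * j) * I)‖ =
      ‖charFun (μ.map fun ω => (Y ω : ℝ)) t‖ := by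
    rw [norm_mul, ← ofReal_intCast, ← Complex.ofReal_mul, ← Complex.ofReal_neg,
      norm_exp_ofReal_mul_I, mul_one]
  rw [le_inv_mul_iff₀ (by positivity)]
  calc 2 * π * μ.real {ω | Y ω = j}
      = ‖∫ t in -π..π, charFun (μ.map fun ω => (Y ω : ℝ)) t * cexp (-(t * j) * I)‖ := by
        rw [integral_charFun_mul_exp_eq hY, ← ofReal_ofNat, ← Complex.ofReal_mul,
          ← Complex.ofReal_mul, norm_real, Real.norm_of_nonneg (by positivity)]
    _ ≤ ∫ t in -π..π, ‖charFun (μ.map fun ω => (Y ω : ℝ)) t * cexp (-(t * j) * I)‖ :=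
        intervalIntegral.norm_integral_le_integral_norm (neg_le_self pi_pos.le)
    _ = ∫ t in -π..π, ‖charFun (μ.map fun ω => (Y ω : ℝ)) t‖ := by simp_rw [hnorm]

lemma norm_charFun_sq_eq_integral_cos {ν : Measure ℝ} [IsProbabilityMeasure ν] (t : ℝ) :
    ‖charFun ν t‖ ^ 2 = ∫ p, Real.cos (t * (p.1 - p.2)) ∂(ν.prod ν) := by
  have hint : Integrable (fun p : ℝ × ℝ => cexp (↑(t * (p.1 - p.2)) * I)) (ν.prod ν) :=
    Integrable.of_bound (by fun_prop) 1 (ae_of_all _ fun p => (norm_exp_ofReal_mul_I _).le)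
  have h : charFun ν t * charFun ν (-t) = ∫ p, cexp (↑(t * (p.1 - p.2)) * I) ∂(ν.prod ν) := by
    simp_rw [charFun_apply_real, ← integral_prod_mul, ← Complex.exp_add]
    congr 1 with p
    push_cast; ring_nf
  rw [← Complex.normSq_eq_norm_sq, ← Complex.ofReal_re (normSq _), ← Complex.mul_conj,
    ← charFun_neg, h, ← RCLike.re_eq_complex_re, ← integral_re hint]
  simp_rw [RCLike.re_eq_complex_re, exp_ofReal_mul_I_re]

lemma norm_charFun_sq_le {ν : Measure ℝ} [IsProbabilityMeasure ν] (a b t : ℝ) :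
    ‖charFun ν t‖ ^ 2 ≤ 1 - ν.real {a} * ν.real {b} * (1 - Real.cos ((b - a) * t)) := by
  have hcos : Integrable (fun p : ℝ × ℝ => Real.cos (t * (p.1 - p.2))) (ν.prod ν) :=
    Integrable.of_bound (by fun_prop) 1 (ae_of_all _ fun p => Real.abs_cos_le_one _)
  have hbox : MeasurableSet (({b} : Set ℝ) ×ˢ {a}) :=
    (measurableSet_singleton b).prod (measurableSet_singleton a)
  have hle : ({b} ×ˢ {a} : Set (ℝ × ℝ)).indicator (fun _ => 1 - Real.cos ((b - a) * t)) ≤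
      fun p => 1 - Real.cos (t * (p.1 - p.2)) := by
    refine Set.indicator_le' (fun p ⟨hb, ha⟩ => ?_) (fun p _ => sub_nonneg.2 (Real.cos_le_one _))
    rw [Set.mem_singleton_iff.1 ha, Set.mem_singleton_iff.1 hb, mul_comm]
  have hgap : ∫ p, (1 - Real.cos (t * (p.1 - p.2))) ∂(ν.prod ν) = 1 - ‖charFun ν t‖ ^ 2 := by
    rw [integral_sub (integrable_const 1) hcos, norm_charFun_sq_eq_integral_cos]
    simp
  have hgapInt : Integrable (fun p : ℝ × ℝ => 1 - Real.cos (t * (p.1 - p.2))) (ν.prod ν) :=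
    (integrable_const 1).sub hcos
  have := integral_mono ((integrable_const _).indicator hbox) hgapInt hle
  rw [integral_indicator_const _ hbox, measureReal_prod_prod, hgap, smul_eq_mul] at this
  linarith

end

lemma norm_charFun_le_exp {ν : Measure ℝ} [IsProbabilityMeasure ν] (a b t : ℝ) :
    ‖charFun ν t‖ ≤ exp (-(ν.real {a} * ν.real {b} / 2) * (1 - cos ((b - a) * t))) := by
  rw [← pow_le_pow_iff_left₀ (norm_nonneg _) (exp_pos _).le two_ne_zero, ← exp_nat_mul]
  calc ‖charFun ν t‖ ^ 2 ≤ 1 - ν.real {a} * ν.real {b} * (1 - cos ((b - a) * t)) :=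
        norm_charFun_sq_le a b t
    _ ≤ exp (-(ν.real {a} * ν.real {b} * (1 - cos ((b - a) * t)))) := by
        linarith [add_one_le_exp (-(ν.real {a} * ν.real {b} * (1 - cos ((b - a) * t))))]
    _ = exp ((2 : ℕ) * (-(ν.real {a} * ν.real {b} / 2) * (1 - cos ((b - a) * t)))) := by
        push_cast; ring_nf

lemma integral_norm_charFun_pow_le {ν : Measure ℝ} [IsProbabilityMeasure ν] {a b : ℤ}
    (hab : a ≠ b) (hp : 0 < ν.real {(a : ℝ)} * ν.real {(b : ℝ)}) {n : ℕ} (hn : n ≠ 0) :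
    ∫ t in -π..π, ‖charFun ν t‖ ^ n ≤
      √(π ^ 3 / (n * (ν.real {(a : ℝ)} * ν.real {(b : ℝ)}))) := by
  set p := ν.real {(a : ℝ)} * ν.real {(b : ℝ)}
  set g : ℝ → ℝ := fun u => exp (-(n * p / 2) * (1 - cos u))
  have hg : Continuous g := by fun_prop
  have hper : Function.Periodic g (2 * π) := fun u => by simp [g]
  have hsub := hper.intervalIntegral_comp_int_mul (fun _ _ => hg.intervalIntegrable _ _)
    (sub_ne_zero.2 hab.symm) (-π)
  rw [show -π + 2 * π = π by ring] at hsub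
  calc ∫ t in -π..π, ‖charFun ν t‖ ^ n
      ≤ ∫ t in -π..π, g ((b - a : ℤ) * t) := by
        refine intervalIntegral.integral_mono_on (neg_le_self pi_pos.le)
          (Continuous.intervalIntegrable (by fun_prop) _ _)
          (Continuous.intervalIntegrable (by fun_prop) _ _) fun t _ => ?_
        calc ‖charFun ν t‖ ^ n ≤ exp (-(p / 2) * (1 - cos ((b - a) * t))) ^ n :=
              pow_le_pow_left₀ (norm_nonneg _) (norm_charFun_le_exp _ _ t) n
          _ = g ((b - a : ℤ) * t) := by
              rw [← exp_nat_mul]; push_cast [g]; ring_nf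
    _ = ∫ t in -π..π, g t := hsub
    _ ≤ √(π ^ 3 / (n * p)) := by
        convert integral_exp_neg_mul_one_sub_cos_le (c := n * p / 2) (by positivity) using 3
        ring

lemma charFun_map_sum_eq_pow {X : ℕ → Ω → ℝ} (hmeas : ∀ i, Measurable (X i))
    (hindep : iIndepFun X μ) (hident : ∀ i, IdentDistrib (X i) (X 0) μ μ) (s : Finset ℕ) :
    charFun (μ.map (fun ω => ∑ i ∈ s, X i ω)) = charFun (μ.map (X 0)) ^ s.card := by
  rw [(hindep.restrict s).charFun_map_fun_finsetSum_eq_prod fun i _ => (hmeas i).aemeasurable,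
    Finset.prod_congr rfl fun i _ => by rw [(hident i).map_eq], Finset.prod_const]

theorem exists_measureReal_sum_eq_le_div_sqrt [IsProbabilityMeasure μ] {Z : ℕ → Ω → ℤ}
    (hmeas : ∀ i, Measurable (Z i)) (hindep : iIndepFun Z μ)
    (hident : ∀ i, IdentDistrib (Z i) (Z 0) μ μ) {a b : ℤ} (hab : a ≠ b)
    (ha : μ {ω | Z 0 ω = a} ≠ 0) (hb : μ {ω | Z 0 ω = b} ≠ 0) :
    ∃ K, ∀ s : Finset ℕ, s.Nonempty → ∀ j : ℤ,
      μ.real {ω | ∑ i ∈ s, Z i ω = j} ≤ K / √s.card := by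
  have hcast : Measurable fun k : ℤ => (k : ℝ) := measurable_from_top
  have hX (i : ℕ) : Measurable fun ω => (Z i ω : ℝ) := hcast.comp (hmeas i)
  set ν := μ.map fun ω => (Z 0 ω : ℝ)
  have hν : IsProbabilityMeasure ν := Measure.isProbabilityMeasure_map (hX 0).aemeasurable
  have hatom (c : ℤ) (hc : μ {ω | Z 0 ω = c} ≠ 0) : 0 < ν.real {(c : ℝ)} := by
    rw [map_measureReal_apply (hX 0) (measurableSet_singleton _)]
    exact ENNReal.toReal_pos (by simpa [Set.preimage] using hc) (measure_ne_top _ _)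
  set p := ν.real {(a : ℝ)} * ν.real {(b : ℝ)}
  have hp : 0 < p := mul_pos (hatom a ha) (hatom b hb)
  refine ⟨(2 * π)⁻¹ * √(π ^ 3 / p), fun s hs j => ?_⟩
  have hcharFun : charFun (μ.map fun ω => ((∑ i ∈ s, Z i ω : ℤ) : ℝ)) = charFun ν ^ s.card := by
    push_cast
    exact charFun_map_sum_eq_pow hX
      (hindep.comp _ fun _ => hcast) (fun i => (hident i).comp hcast) s
  calc μ.real {ω | ∑ i ∈ s, Z i ω = j}
      ≤ (2 * π)⁻¹ * ∫ t in -π..π, ‖charFun (μ.map fun ω => ((∑ i ∈ s, Z i ω : ℤ) : ℝ)) t‖ :=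
        measureReal_eq_le_integral_norm_charFun (Finset.measurable_sum s fun i _ => hmeas i) j
    _ = (2 * π)⁻¹ * ∫ t in -π..π, ‖charFun ν t‖ ^ s.card := by
        simp_rw [hcharFun, Pi.pow_apply, norm_pow]
    _ ≤ (2 * π)⁻¹ * √(π ^ 3 / (s.card * p)) := by
        gcongr
        exact integral_norm_charFun_pow_le hab hp hs.card_ne_zero
    _ = (2 * π)⁻¹ * √(π ^ 3 / p) / √s.card := by
        rw [mul_comm (s.card : ℝ), ← div_div, sqrt_div' _ (Nat.cast_nonneg _), mul_div_assoc]

lemma exists_ae_eq_const_or_exists_two_atoms [NeZero μ] {α : Type*} [Countable α]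
    (Y : Ω → α) :
    (∃ c, ∀ᵐ ω ∂μ, Y ω = c) ∨ ∃ a b, a ≠ b ∧ μ {ω | Y ω = a} ≠ 0 ∧ μ {ω | Y ω = b} ≠ 0 := by
  refine or_iff_not_imp_right.2 fun h => ?_
  push Not at h
  obtain ⟨c, hc⟩ : ∃ c, μ {ω | Y ω = c} ≠ 0 := by
    by_contra! h0
    have hnull := measure_iUnion_null h0
    rw [Set.iUnion_eq_univ_iff.2 fun ω => ⟨Y ω, rfl⟩, Measure.measure_univ_eq_zero] at hnull
    exact NeZero.ne μ hnull
  refine ⟨c, measure_mono_null (fun ω (hω : Y ω ≠ c) => ?_)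
    (measure_iUnion_null fun b : {b // b ≠ c} => h c b b.2.symm hc)⟩
  exact Set.mem_iUnion.2 ⟨⟨Y ω, hω⟩, rfl⟩

lemma measureReal_abs_sum_sub_ge_le [IsFiniteMeasure μ] {X : ℕ → Ω → ℝ} (hindep : iIndepFun X μ)
    (hident : ∀ i, IdentDistrib (X i) (X 0) μ μ) (hX : MemLp (X 0) 2 μ) (s : Finset ℕ) {c : ℝ}
    (hc : 0 < c) :
    μ.real {ω | c ≤ |∑ i ∈ s, X i ω - s.card * μ[X 0]|} ≤ s.card * Var[X 0; μ] / c ^ 2 := by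
  have hXi (i : ℕ) : MemLp (X i) 2 μ := (hident i).symm.memLp_snd hX
  have hsum : MemLp (∑ i ∈ s, X i) 2 μ := memLp_finsetSum' s fun i _ => hXi i
  have hmean : μ[∑ i ∈ s, X i] = (s.card : ℝ) * μ[X 0] := by
    simp [integral_finsetSum s fun i _ => (hXi i).integrable one_le_two,
      fun i => (hident i).integral_eq]
  have hvar : Var[∑ i ∈ s, X i; μ] = (s.card : ℝ) * Var[X 0; μ] := by
    rw [IndepFun.variance_sum (fun i _ => hXi i) fun i _ j _ hij => hindep.indepFun hij]
    simp [fun i => (hident i).variance_eq]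
  have := meas_ge_le_variance_div_sq hsum hc
  rw [hmean, hvar] at this
  simpa [measureReal_def] using ENNReal.toReal_le_of_le_ofReal
    (div_nonneg (mul_nonneg s.card.cast_nonneg (variance_nonneg _ _)) (sq_nonneg c)) this

lemma ProbabilityTheory.iIndepFun.indepFun_finsetSum_of_disjoint {ι β : Type*}
    [AddCommMonoid β] [MeasurableSpace β] [MeasurableAdd₂ β] {X : ι → Ω → β}
    (hindep : iIndepFun X μ) (hmeas : ∀ i, Measurable (X i))
    {s t : Finset ι} (hst : Disjoint s t) :
    IndepFun (fun ω => ∑ i ∈ s, X i ω) (fun ω => ∑ i ∈ t, X i ω) μ := by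
  have hsum (u : Finset ι) : Measurable fun v : u → β => ∑ i, v i :=
    Finset.measurable_sum _ fun i _ => measurable_pi_apply i
  have := (hindep.indepFun_finset s t hst hmeas).comp (hsum s) (hsum t)
  convert this using 1 <;> ext ω <;> exact (Finset.sum_coe_sort _ fun i => X i ω).symm

lemma measureReal_mem_inter_add_eq_le [IsFiniteMeasure μ] {A B : Ω → ℤ} (hA : Measurable A)
    (hB : Measurable B) (hAB : IndepFun A B μ) {q : ℝ} (hq : ∀ y, μ.real {ω | B ω = y} ≤ q)
    (G : Set ℤ) (z : ℤ) :
    μ.real ({ω | A ω ∈ G} ∩ {ω | A ω + B ω = z}) ≤ q * μ.real {ω | A ω ∈ G} := by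
  have hq0 : 0 ≤ q := measureReal_nonneg.trans (hq 0)
  set S : Set (ℤ × ℤ) := {p | p.1 ∈ G ∧ p.1 + p.2 = z}
  -- the law of `(A, B)` is a product, and each `x`-slice of `S` is at most the point `z - x`
  have hslice (x : ℤ) :
      (μ.map B) (Prod.mk x ⁻¹' S) ≤ G.indicator (fun _ => ENNReal.ofReal q) x := by
    by_cases hx : x ∈ G
    · have : Prod.mk x ⁻¹' S = {z - x} := by ext y; simp [S, hx]; omega
      rw [Set.indicator_of_mem hx, this, Measure.map_apply hB (measurableSet_singleton _),
        ENNReal.le_ofReal_iff_toReal_le (measure_ne_top _ _) hq0]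
      exact hq (z - x)
    · have : Prod.mk x ⁻¹' S = ∅ := by ext y; simp [S, hx]
      simp [this]
  have hmeasure : μ ({ω | A ω ∈ G} ∩ {ω | A ω + B ω = z}) ≤
      ENNReal.ofReal q * μ {ω | A ω ∈ G} := by
    calc μ ({ω | A ω ∈ G} ∩ {ω | A ω + B ω = z})
        = ((μ.map A).prod (μ.map B)) S := by
          rw [← (indepFun_iff_map_prod_eq_prod_map_map hA.aemeasurable hB.aemeasurable).1 hAB,
            Measure.map_apply (hA.prodMk hB) (Set.to_countable S).measurableSet]
          rfl
      _ = ∫⁻ x, (μ.map B) (Prod.mk x ⁻¹' S) ∂(μ.map A) :=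
          Measure.prod_apply (Set.to_countable S).measurableSet
      _ ≤ ∫⁻ x, G.indicator (fun _ => ENNReal.ofReal q) x ∂(μ.map A) := lintegral_mono hslice
      _ = ENNReal.ofReal q * μ {ω | A ω ∈ G} := by
          rw [lintegral_indicator_const (Set.to_countable G).measurableSet,
            Measure.map_apply hA (Set.to_countable G).measurableSet]
          rfl
  have := ENNReal.toReal_mono (by finiteness) hmeasure
  rwa [ENNReal.toReal_mul, ENNReal.toReal_ofReal hq0] at this

lemma measureReal_add_eq_le [IsFiniteMeasure μ] {A B : Ω → ℤ} (hA : Measurable A)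
    (hB : Measurable B) (hAB : IndepFun A B μ) {qA qB : ℝ}
    (hqA : ∀ y, μ.real {ω | A ω = y} ≤ qA) (hqB : ∀ y, μ.real {ω | B ω = y} ≤ qB)
    {α β r : ℝ} {z : ℤ} (hr : 2 * r ≤ |z - (α + β)|) :
    μ.real {ω | A ω + B ω = z} ≤
      qB * μ.real {ω | r ≤ |A ω - α|} + qA * μ.real {ω | r ≤ |B ω - β|} := by
  set GA : Set ℤ := {x | r ≤ |x - α|}
  set GB : Set ℤ := {x | r ≤ |x - β|}
  have hcover : {ω | A ω + B ω = z} ⊆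
      ({ω | A ω ∈ GA} ∩ {ω | A ω + B ω = z}) ∪ ({ω | B ω ∈ GB} ∩ {ω | B ω + A ω = z}) := by
    intro ω (hω : A ω + B ω = z)
    by_cases hAω : r ≤ |A ω - α|
    · exact Or.inl ⟨hAω, hω⟩
    refine Or.inr ⟨?_, (add_comm (B ω) (A ω)).trans hω⟩
    have hsum : ((B ω : ℤ) : ℝ) - β = (z - (α + β)) - (A ω - α) := by
      rw [← hω]; push_cast; ring
    show r ≤ |(B ω : ℝ) - β|
    rw [hsum]
    linarith [abs_sub_abs_le_abs_sub ((z : ℝ) - (α + β)) (A ω - α)]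
  calc μ.real {ω | A ω + B ω = z}
      ≤ μ.real ({ω | A ω ∈ GA} ∩ {ω | A ω + B ω = z}) +
          μ.real ({ω | B ω ∈ GB} ∩ {ω | B ω + A ω = z}) :=
        (measureReal_mono hcover).trans (measureReal_union_le _ _)
    _ ≤ _ := add_le_add (measureReal_mem_inter_add_eq_le hA hB hAB hqB GA z)
        (measureReal_mem_inter_add_eq_le hB hA hAB.symm hqA GB z)

lemma div_sqrt_le_sqrt_three_mul_sqrt {x y n : ℝ} (hx : 0 < x) (hy : 0 ≤ y) (hyn : y ≤ n)
    (hnx : n ≤ 3 * x) : y / √x ≤ √3 * √n := by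
  rw [div_le_iff₀ (sqrt_pos.2 hx), ← sqrt_mul zero_le_three,
    ← sqrt_mul (by linarith : (0 : ℝ) ≤ 3 * n)]
  calc y ≤ √(n ^ 2) := by rw [sqrt_sq (hy.trans hyn)]; exact hyn
    _ ≤ √(3 * n * x) := sqrt_le_sqrt (by nlinarith)

lemma div_sqrt_mul_add_div_sqrt_mul_le {x y K σ2 r : ℝ} (hx : 0 < x) (hy : 0 < y)
    (hx3 : x + y ≤ 3 * x) (hy3 : x + y ≤ 3 * y) (hK : 0 ≤ K) (hσ2 : 0 ≤ σ2) :
    K / √y * (x * σ2 / r ^ 2) + K / √x * (y * σ2 / r ^ 2) ≤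
      2 * √3 * K * σ2 * √(x + y) / r ^ 2 := by
  have hxy := div_sqrt_le_sqrt_three_mul_sqrt hy hx.le (by linarith) hy3
  have hyx := div_sqrt_le_sqrt_three_mul_sqrt hx hy.le (by linarith) hx3
  calc K / √y * (x * σ2 / r ^ 2) + K / √x * (y * σ2 / r ^ 2)
      = K * σ2 / r ^ 2 * (x / √y + y / √x) := by ring
    _ ≤ K * σ2 / r ^ 2 * (√3 * √(x + y) + √3 * √(x + y)) := by gcongr
    _ = 2 * √3 * K * σ2 * √(x + y) / r ^ 2 := by ring

section IntegerValued

variable [IsProbabilityMeasure μ] {Z : ℕ → Ω → ℤ} (hindep : iIndepFun Z μ)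
  (hident : ∀ i, IdentDistrib (Z i) (Z 0) μ μ) (hmean : μ[fun ω => (Z 0 ω : ℝ)] = 1)
  (hsq : MemLp (fun ω => (Z 0 ω : ℝ)) 2 μ)
include hindep hident hmean hsq

lemma measureReal_abs_sum_sub_card_ge_le (s : Finset ℕ) {r : ℝ} (hr : 0 < r) :
    μ.real {ω | r ≤ |((∑ i ∈ s, Z i ω : ℤ) : ℝ) - s.card|} ≤
      s.card * Var[fun ω => (Z 0 ω : ℝ); μ] / r ^ 2 := by
  have hcast : Measurable fun k : ℤ => (k : ℝ) := measurable_from_top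
  simpa [hmean] using measureReal_abs_sum_sub_ge_le (X := fun i ω => (Z i ω : ℝ))
    (hindep.comp _ fun _ => hcast) (fun i => (hident i).comp hcast) hsq s hr

lemma measureReal_sum_range_eq_sub_le (n : ℕ) {m : ℤ} (hm : m ≠ 0) :
    μ.real {ω | ∑ i ∈ Finset.range n, Z i ω = n - m} ≤
      n * Var[fun ω => (Z 0 ω : ℝ); μ] / m ^ 2 := by
  have hdev : {ω | ∑ i ∈ Finset.range n, Z i ω = n - m} ⊆
      {ω | |(m : ℝ)| ≤ |((∑ i ∈ Finset.range n, Z i ω : ℤ) : ℝ) - (Finset.range n).card|} := by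
    intro ω (hω : ∑ i ∈ Finset.range n, Z i ω = n - m)
    simp only [Set.mem_ofPred_eq, hω, Finset.card_range]
    push_cast
    rw [sub_sub_cancel_left, abs_neg]
  have := (measureReal_mono hdev).trans (measureReal_abs_sum_sub_card_ge_le hindep hident hmean
    hsq _ (abs_pos.2 (Int.cast_ne_zero.2 hm)))
  rwa [Finset.card_range, sq_abs] at this

lemma measureReal_sum_range_eq_sub_le_sqrt (hmeas : ∀ i, Measurable (Z i)) {K : ℝ}
    (hK : ∀ s : Finset ℕ, s.Nonempty → ∀ j : ℤ, μ.real {ω | ∑ i ∈ s, Z i ω = j} ≤ K / √s.card)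
    {n : ℕ} (hn : 2 ≤ n) {m : ℤ} (hm : m ≠ 0) :
    μ.real {ω | ∑ i ∈ Finset.range n, Z i ω = n - m} ≤
      8 * √3 * K * Var[fun ω => (Z 0 ω : ℝ); μ] * √n / m ^ 2 := by
  set σ2 := Var[fun ω => (Z 0 ω : ℝ); μ]
  set h := n / 2
  set A := fun ω => ∑ i ∈ Finset.range h, Z i ω
  set B := fun ω => ∑ i ∈ Finset.Ico h n, Z i ω
  have hK0 : 0 ≤ K := by simpa using measureReal_nonneg.trans (hK {0} (by simp) 0)
  have hcard : (h : ℝ) + ((n - h : ℕ) : ℝ) = n := by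
    rw [← Nat.cast_add, Nat.add_sub_cancel' (Nat.div_le_self n 2)]
  have hh : 0 < h := by omega
  have hnh : 0 < n - h := by omega
  have hdev : 2 * (|(m : ℝ)| / 2) ≤ |((n - m : ℤ) : ℝ) - (h + ((n - h : ℕ) : ℝ))| := by
    rw [hcard]; push_cast; rw [sub_sub_cancel_left, abs_neg]; linarith
  have hdisj : Disjoint (Finset.range h) (Finset.Ico h n) := by
    simpa only [Finset.range_eq_Ico] using Finset.Ico_disjoint_Ico_consecutive 0 h n
  have hAB := measureReal_add_eq_le (z := n - m) (Finset.measurable_sum _ fun i _ => hmeas i)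
    (Finset.measurable_sum _ fun i _ => hmeas i)
    (hindep.indepFun_finsetSum_of_disjoint hmeas hdisj)
    (by simpa using hK (Finset.range h) (by simpa using hh.ne'))
    (by simpa using hK (Finset.Ico h n) (by simpa using hnh)) hdev
  have hchebA := measureReal_abs_sum_sub_card_ge_le hindep hident hmean hsq (Finset.range h)
    (r := |(m : ℝ)| / 2) (by positivity)
  have hchebB := measureReal_abs_sum_sub_card_ge_le hindep hident hmean hsq (Finset.Ico h n)
    (r := |(m : ℝ)| / 2) (by positivity)
  simp only [Finset.card_range, Nat.card_Ico] at hchebA hchebB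
  calc μ.real {ω | ∑ i ∈ Finset.range n, Z i ω = n - m}
      = μ.real {ω | A ω + B ω = n - m} := by
        simp only [A, B, Finset.sum_range_add_sum_Ico _ (show h ≤ n from Nat.div_le_self n 2)]
    _ ≤ K / √(n - h : ℕ) * (h * σ2 / (|(m : ℝ)| / 2) ^ 2) +
          K / √h * ((n - h : ℕ) * σ2 / (|(m : ℝ)| / 2) ^ 2) :=
        hAB.trans (add_le_add (mul_le_mul_of_nonneg_left hchebA (by positivity))
          (mul_le_mul_of_nonneg_left hchebB (by positivity)))
    _ ≤ 2 * √3 * K * σ2 * √(h + (n - h : ℕ)) / (|(m : ℝ)| / 2) ^ 2 :=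
        div_sqrt_mul_add_div_sqrt_mul_le (by positivity) (by positivity)
          (by rw [hcard]; exact_mod_cast (show n ≤ 3 * h by omega))
          (by rw [hcard]; exact_mod_cast (show n ≤ 3 * (n - h) by omega)) hK0
          (variance_nonneg _ _)
    _ = 8 * √3 * K * σ2 * √n / m ^ 2 := by
        rw [hcard, div_pow, sq_abs]
        ring

theorem exists_measureReal_sum_range_eq_sub_le (hmeas : ∀ i, Measurable (Z i)) :
    ∃ C : ℝ, ∀ n : ℕ, 1 ≤ n → ∀ m : ℤ, m ≠ 0 →
      μ.real {ω | ∑ i ∈ Finset.range n, Z i ω = n - m} ≤ C * √n / m ^ 2 := by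
  rcases exists_ae_eq_const_or_exists_two_atoms (μ := μ) (Z 0) with ⟨c, hc⟩ | ⟨a, b, hab, ha, hb⟩
  · have hvar : Var[fun ω => (Z 0 ω : ℝ); μ] = 0 := by
      rw [variance_congr (Y := fun _ => (c : ℝ)) (hc.mono fun ω hω => by simp only [hω])]
      simp [variance, evariance]
    refine ⟨0, fun n _ m hm => ?_⟩
    simpa [hvar] using measureReal_sum_range_eq_sub_le hindep hident hmean hsq n hm
  obtain ⟨K, hK⟩ := exists_measureReal_sum_eq_le_div_sqrt hmeas hindep hident hab ha hb
  set σ2 := Var[fun ω => (Z 0 ω : ℝ); μ]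
  refine ⟨max σ2 (8 * √3 * K * σ2), fun n hn m hm => ?_⟩
  rcases hn.eq_or_lt with rfl | hn
  · calc μ.real {ω | ∑ i ∈ Finset.range 1, Z i ω = (1 : ℕ) - m}
        ≤ (1 : ℕ) * σ2 / m ^ 2 := measureReal_sum_range_eq_sub_le hindep hident hmean hsq 1 hm
      _ ≤ max σ2 (8 * √3 * K * σ2) * √(1 : ℕ) / m ^ 2 := by
        simp only [Nat.cast_one, one_mul, sqrt_one, mul_one]
        gcongr
        exact le_max_left _ _
  · calc μ.real {ω | ∑ i ∈ Finset.range n, Z i ω = n - m}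
        ≤ 8 * √3 * K * σ2 * √n / m ^ 2 :=
          measureReal_sum_range_eq_sub_le_sqrt hindep hident hmean hsq hmeas hK hn hm
      _ ≤ max σ2 (8 * √3 * K * σ2) * √n / m ^ 2 := by
        gcongr
        exact le_max_right _ _

end IntegerValued

/-- If `ξ` is a nonnegative-integer valued random variable with mean `1` and finite second
moment, and `S_n` is the sum of `n` i.i.d. copies of `ξ`, then there is a constant `C`
such that `P(S_n = n - m) ≤ C · n^(1/2) / m²` for all `n ≥ 1` and all integers `m ≠ 0`. -/
theorem local_bound_sqrt_n_m_sq
    {Ω : Type} [MeasureSpace Ω] [IsProbabilityMeasure (ℙ : Measure Ω)]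
    (X : ℕ → Ω → ℕ) (hXmeas : ∀ i, Measurable (X i))
    (hindep : iIndepFun X ℙ)
    (hident : ∀ i, IdentDistrib (X i) (X 0) ℙ ℙ)
    (hmean : ∫ ω, (X 0 ω : ℝ) ∂ℙ = 1)
    (hsq : Integrable (fun ω => (X 0 ω : ℝ) ^ 2) ℙ)
    :
    ∃ C : ℝ, ∀ n : ℕ, 1 ≤ n → ∀ m : ℤ, m ≠ 0 →
      (ℙ {ω | (∑ i ∈ Finset.range n, (X i ω : ℤ)) = (n : ℤ) - m}).toReal
        ≤ C * Real.sqrt n / (m : ℝ) ^ 2 := by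
  have hcast : Measurable fun k : ℕ => (k : ℤ) := measurable_from_top
  have hsq' : MemLp (fun ω => ((X 0 ω : ℤ) : ℝ)) 2 ℙ := by
    simpa using (memLp_two_iff_integrable_sq (by fun_prop)).2 hsq
  exact exists_measureReal_sum_range_eq_sub_le (Z := fun i ω => (X i ω : ℤ))
    (hindep.comp _ fun _ => hcast) (fun i => (hident i).comp hcast) (by simpa using hmean) hsq'
    fun i => hcast.comp (hXmeas i)
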